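/- arXiv:1809.10945 — 4 statements merged into one kernel-verified Lean document; each statement's English description precedes it below -/
import Mathlib

section
/- Let K be a finite abstract simplicial complex and let v, v' be two distinct vertices of K. Then v is dominated by v' if and only if every maximal simplex of K that contains v also contains v'. -/
/-- `K` is an abstract simplicial complex: every member is nonempty and every
nonempty subset of a member belongs to `K`. -/
def IsComplex {V : Type*} (K : Set (Finset V)) : Prop :=
  (∀ σ ∈ K, σ.Nonempty) ∧ ∀ σ ∈ K, ∀ τ : Finset V, τ ⊆ σ → τ.Nonempty → τ ∈ K

/-- `v` is a vertex of `K`. -/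
def IsVertex {V : Type*} (K : Set (Finset V)) (v : V) : Prop := {v} ∈ K

/-- `σ` is a maximal simplex of `K`. -/
def IsMaximalSimplex {V : Type*} (K : Set (Finset V)) (σ : Finset V) : Prop :=
  σ ∈ K ∧ ∀ τ ∈ K, σ ⊆ τ → σ = τ

/-- The link of the vertex `v` in `K`. -/
def link {V : Type*} [DecidableEq V] (K : Set (Finset V)) (v : V) : Set (Finset V) :=
  {τ | τ ∈ K ∧ v ∉ τ ∧ τ ∪ {v} ∈ K}

/-- `v` is dominated by the vertex `v' ≠ v`: the link of `v` is a cone with apex `v'`. -/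
def Dominated {V : Type*} [DecidableEq V] (K : Set (Finset V)) (v v' : V) : Prop :=
  v' ≠ v ∧ ({v'} : Finset V) ∈ link K v ∧ ∀ τ ∈ link K v, τ ∪ {v'} ∈ link K v

/-!
A vertex `v'` dominates `v` exactly when `insert v' σ` is a simplex for every simplex `σ ∋ v`:
the link of `v` consists of the faces `σ \ {v}`, and coning them off with `v'` is the same as
adding `v'` to `σ`. For a maximal `σ` this forces `v' ∈ σ`; conversely, in a finite complex every
simplex containing `v` lies in a maximal one, which then contains `v'` as well.
-/

section

variable {V : Type*} {K : Set (Finset V)}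

lemma IsComplex.mem_of_subset (hK : IsComplex K) {σ τ : Finset V} (hσ : σ ∈ K) (hτσ : τ ⊆ σ)
    (hτ : τ.Nonempty) : τ ∈ K :=
  hK.2 σ hσ τ hτσ hτ

lemma exists_isMaximalSimplex_superset (hfin : K.Finite) {σ : Finset V} (hσ : σ ∈ K) :
    ∃ ρ, IsMaximalSimplex K ρ ∧ σ ⊆ ρ := by
  have hS : ({ρ ∈ K | σ ⊆ ρ} : Set (Finset V)).Finite := hfin.subset fun ρ hρ => hρ.1
  obtain ⟨ρ, ⟨hρK, hσρ⟩, hmax⟩ := hS.exists_maximalFor id _ ⟨σ, hσ, subset_rfl⟩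
  exact ⟨ρ, ⟨hρK, fun τ hτ hρτ => le_antisymm hρτ (hmax ⟨hτ, hσρ.trans hρτ⟩ hρτ)⟩, hσρ⟩

lemma IsMaximalSimplex.mem_of_insert_mem [DecidableEq V] {σ : Finset V} {a : V}
    (hσ : IsMaximalSimplex K σ) (h : insert a σ ∈ K) : a ∈ σ := by
  rw [hσ.2 _ h (Finset.subset_insert a σ)]
  exact Finset.mem_insert_self a σ

section Domination

variable [DecidableEq V] {v v' : V}

lemma Dominated.insert_mem (hK : IsComplex K) (hd : Dominated K v v') {σ : Finset V}
    (hσ : σ ∈ K) (hvσ : v ∈ σ) : insert v' σ ∈ K := by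
  obtain ⟨-, hcone, hapex⟩ := hd
  rcases (σ.erase v).eq_empty_or_nonempty with hempty | hface
  · have hσv : σ = {v} := by
      rw [Finset.erase_eq_empty_iff] at hempty
      exact hempty.resolve_left (Finset.ne_empty_of_mem hvσ)
    rw [hσv, Finset.insert_eq]
    exact hcone.2.2
  · have hlink : σ.erase v ∈ link K v := by
      refine ⟨hK.mem_of_subset hσ (Finset.erase_subset v σ) hface, Finset.notMem_erase v σ, ?_⟩
      rwa [Finset.union_comm, ← Finset.insert_eq, Finset.insert_erase hvσ]
    have hconed := (hapex _ hlink).2.2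
    have hsame : σ.erase v ∪ {v'} ∪ {v} = insert v' σ := by
      ext x
      simp only [Finset.mem_union, Finset.mem_erase, Finset.mem_singleton, Finset.mem_insert]
      grind
    rwa [hsame] at hconed

lemma union_singleton_mem_link (hK : IsComplex K) (hne : v' ≠ v) {τ : Finset V} (hvτ : v ∉ τ)
    (h : insert v' (insert v τ) ∈ K) : τ ∪ {v'} ∈ link K v := by
  refine ⟨hK.mem_of_subset h ?_ ⟨v', by simp⟩, by simp [hvτ, hne.symm], ?_⟩
  · intro x
    simp only [Finset.mem_union, Finset.mem_singleton, Finset.mem_insert]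
    tauto
  · convert h using 1
    ext x
    simp only [Finset.mem_union, Finset.mem_singleton, Finset.mem_insert]
    tauto

lemma dominated_of_forall_insert_mem (hK : IsComplex K) (hv : IsVertex K v) (hne : v' ≠ v)
    (h : ∀ σ ∈ K, v ∈ σ → insert v' σ ∈ K) : Dominated K v v' := by
  refine ⟨hne, ?_, fun τ hτ => ?_⟩
  · simpa using union_singleton_mem_link hK hne (Finset.notMem_empty v)
      (by simpa using h {v} hv (Finset.mem_singleton_self v))
  · obtain ⟨-, hvτ, hτv⟩ := hτ
    refine union_singleton_mem_link hK hne hvτ ?_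
    simpa [Finset.union_comm, ← Finset.insert_eq] using
      h _ hτv (Finset.mem_union_right τ (Finset.mem_singleton_self v))

lemma insert_mem_of_forall_isMaximalSimplex (hK : IsComplex K) (hfin : K.Finite)
    (h : ∀ σ, IsMaximalSimplex K σ → v ∈ σ → v' ∈ σ) {σ : Finset V} (hσ : σ ∈ K)
    (hvσ : v ∈ σ) : insert v' σ ∈ K := by
  obtain ⟨ρ, hρ, hσρ⟩ := exists_isMaximalSimplex_superset hfin hσ
  exact hK.mem_of_subset hρ.1 (Finset.insert_subset (h ρ hρ (hσρ hvσ)) hσρ)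
    (Finset.insert_nonempty v' σ)

end Domination

end

theorem dominated_iff_maximal_general {V : Type*} [DecidableEq V] (K : Set (Finset V))
    (hK : IsComplex K) (hfin : K.Finite) (v v' : V)
    (hv : IsVertex K v) (hne : v ≠ v') :
    Dominated K v v' ↔ ∀ σ : Finset V, IsMaximalSimplex K σ → v ∈ σ → v' ∈ σ := by
  constructor
  · intro hd σ hσ hvσ
    exact hσ.mem_of_insert_mem (hd.insert_mem hK hσ.1 hvσ)
  · intro h
    exact dominated_of_forall_insert_mem hK hv hne.symm fun σ hσ hvσ =>
      insert_mem_of_forall_isMaximalSimplex hK hfin h hσ hvσ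

/-- A vertex `v` is dominated by `v'` if and only if every maximal simplex of `K`
containing `v` also contains `v'`. -/
theorem dominated_iff_maximal {V : Type*} [DecidableEq V] (K : Set (Finset V))
    (hK : IsComplex K) (hfin : K.Finite) (v v' : V)
    (hv : IsVertex K v) (hv' : IsVertex K v') (hne : v ≠ v') :
    Dominated K v v' ↔ ∀ σ : Finset V, IsMaximalSimplex K σ → v ∈ σ → v' ∈ σ :=
  dominated_iff_maximal_general K hK hfin v v' hv hne
end

section
/- Let K be an abstract simplicial complex and suppose the vertex v is dominated by the vertex v' ≠ v. Define the vertex map r by r(v) = v' and r(w) = w for all w ≠ v. Then r induces a simplicial map from K to K \ v: for every simplex σ ∈ K, the image finset r(σ) is a simplex of K \ v = {σ ∈ K | v ∉ σ}. -/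
/-- The deletion `K \ v` of the vertex `v` from `K`. -/
def deletion {V : Type*} (K : Set (Finset V)) (v : V) : Set (Finset V) :=
  {σ | σ ∈ K ∧ v ∉ σ}

/-!
A simplex avoiding `v` is fixed by the retraction. A simplex `σ ∋ v` is sent to
`(σ \ {v}) ∪ {v'}`: if `σ = {v}` this is the vertex `v'` of the link of `v`; otherwise
`σ \ {v}` lies in the link of `v`, and the link is a cone with apex `v'`.
-/

section Retraction

variable {V : Type*} [DecidableEq V] {K : Set (Finset V)} {σ : Finset V} {v v' : V}

theorem mem_of_mem_link {τ : Finset V} (h : τ ∈ link K v) : τ ∈ K := h.1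

theorem erase_mem_link (hK : IsComplex K) (hσ : σ ∈ K) (hv : v ∈ σ)
    (hne : (σ.erase v).Nonempty) : σ.erase v ∈ link K v :=
  ⟨hK.2 σ hσ _ (σ.erase_subset v) hne, σ.notMem_erase v, by rwa [σ.erase_union_eq v hv]⟩

theorem Dominated.erase_union_singleton_mem (hdom : Dominated K v v') (hK : IsComplex K)
    (hσ : σ ∈ K) (hv : v ∈ σ) : σ.erase v ∪ {v'} ∈ K := by
  rcases (σ.erase v).eq_empty_or_nonempty with hempty | hne
  · rw [hempty, Finset.empty_union]
    exact mem_of_mem_link hdom.2.1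
  · exact mem_of_mem_link (hdom.2.2 _ (erase_mem_link hK hσ hv hne))

theorem image_ite_eq_self_of_notMem (hv : v ∉ σ) :
    σ.image (fun w => if w = v then v' else w) = σ := by
  refine (Finset.image_congr fun w hw => ?_).trans Finset.image_id
  exact if_neg fun (h : w = v) => hv (h ▸ hw)

theorem image_ite_eq_erase_union_of_mem (hv : v ∈ σ) :
    σ.image (fun w => if w = v then v' else w) = σ.erase v ∪ {v'} := by
  ext x
  simp only [Finset.mem_image, Finset.mem_union, Finset.mem_erase, Finset.mem_singleton]
  grind

theorem notMem_image_ite (hne : v' ≠ v) :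
    v ∉ σ.image (fun w => if w = v then v' else w) := by
  simp only [Finset.mem_image, not_exists, not_and]
  intro w _
  split_ifs with h
  · exact hne
  · exact h

end Retraction

/-- If `v` is dominated by `v'`, the retraction map `r` sending `v` to `v'` and fixing
every other vertex induces a simplicial map from `K` to `K \ v`. -/
theorem retraction_isSimplicial {V : Type*} [DecidableEq V] (K : Set (Finset V))
    (hK : IsComplex K) (v v' : V) (hdom : Dominated K v v') :
    ∀ σ ∈ K, σ.image (fun w => if w = v then v' else w) ∈ deletion K v := by
  intro σ hσ
  refine ⟨?_, notMem_image_ite hdom.1⟩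
  by_cases hv : v ∈ σ
  · rw [image_ite_eq_erase_union_of_mem hv]
    exact hdom.erase_union_singleton_mem hK hσ hv
  · rwa [image_ite_eq_self_of_notMem hv]
end

section
/- Let K be a finite abstract simplicial complex. Then every maximal simplex of the nerve N(K) is of the form M_K(v) for some vertex v of K, where M_K(v) is the set of all maximal simplices of K containing v; and conversely, for every vertex v of K the set M_K(v) is a simplex of N(K). -/
/-- The nerve of `K`: all nonempty finite sets of maximal simplices of `K`
with nonempty common intersection. -/
def nerve {V : Type*} (K : Set (Finset V)) : Set (Finset (Finset V)) :=
  {S | S.Nonempty ∧ (∀ σ ∈ S, IsMaximalSimplex K σ) ∧ ∃ x : V, ∀ σ ∈ S, x ∈ σ}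

/-- `M_K(v)`: the set of maximal simplices of `K` containing the vertex `v`. -/
def MK {V : Type*} (K : Set (Finset V)) (v : V) : Set (Finset V) :=
  {σ | IsMaximalSimplex K σ ∧ v ∈ σ}

/-! A simplex of `N(K)` is a set of maximal simplices sharing some vertex `x`, so it lies in
`M_K(x)`. Since `K` is finite, `M_K(x)` is finite and nonempty (`{x}` extends to a maximal
simplex), hence itself a simplex of `N(K)`; so a maximal simplex of `N(K)` equals `M_K(x)`. -/

section
variable {V : Type*} {K : Set (Finset V)}

lemma exists_maximalSimplex_superset (hfin : K.Finite) {σ : Finset V} (hσ : σ ∈ K) :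
    ∃ τ, IsMaximalSimplex K τ ∧ σ ⊆ τ := by
  obtain ⟨τ, hστ, hτ⟩ := hfin.exists_le_maximal hσ
  exact ⟨τ, ⟨hτ.1, fun ρ hρ hτρ => le_antisymm hτρ (hτ.2 hρ hτρ)⟩, hστ⟩

lemma IsComplex.isVertex_of_mem (hK : IsComplex K) {σ : Finset V} (hσ : σ ∈ K) {v : V}
    (hv : v ∈ σ) : IsVertex K v :=
  hK.2 σ hσ {v} (Finset.singleton_subset_iff.2 hv) (Finset.singleton_nonempty v)

lemma finite_MK (hfin : K.Finite) (v : V) : (MK K v).Finite :=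
  hfin.subset fun _ hσ => hσ.1.1

lemma toFinset_MK_mem_nerve (hfin : K.Finite) {v : V} (hv : IsVertex K v) :
    (finite_MK hfin v).toFinset ∈ nerve K := by
  obtain ⟨τ, hτ, hvτ⟩ := exists_maximalSimplex_superset hfin hv
  refine ⟨⟨τ, (Set.Finite.mem_toFinset _).2 ⟨hτ, hvτ (Finset.mem_singleton_self v)⟩⟩,
    fun σ hσ => ((Set.Finite.mem_toFinset _).1 hσ).1, v,
    fun σ hσ => ((Set.Finite.mem_toFinset _).1 hσ).2⟩

end

/-- For a finite complex `K`, the maximal simplices of the nerve `N(K)` are exactly the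
sets `M_K(v)` over the vertices `v` of `K`: every maximal simplex of `N(K)` is of the
form `M_K(v)` for some vertex `v`, and conversely each `M_K(v)` is a simplex of `N(K)`. -/
theorem maximal_of_nerve {V : Type*} (K : Set (Finset V))
    (hK : IsComplex K) (hfin : K.Finite) :
    (∀ S : Finset (Finset V), IsMaximalSimplex (nerve K) S →
      ∃ v : V, IsVertex K v ∧ (S : Set (Finset V)) = MK K v) ∧
    (∀ v : V, IsVertex K v →
      ∃ S : Finset (Finset V), (S : Set (Finset V)) = MK K v ∧ S ∈ nerve K) := by
  refine ⟨fun S hS => ?_,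
    fun v hv => ⟨_, (finite_MK hfin v).coe_toFinset, toFinset_MK_mem_nerve hfin hv⟩⟩
  obtain ⟨⟨⟨σ, hσ⟩, hSmax, x, hx⟩, hSmaximal⟩ := hS
  have hxv : IsVertex K x := hK.isVertex_of_mem (hSmax σ hσ).1 (hx σ hσ)
  have hS_sub : S ⊆ (finite_MK hfin x).toFinset :=
    fun τ hτ => (Set.Finite.mem_toFinset _).2 ⟨hSmax τ hτ, hx τ hτ⟩
  refine ⟨x, hxv, ?_⟩
  rw [hSmaximal _ (toFinset_MK_mem_nerve hfin hxv) hS_sub, Set.Finite.coe_toFinset]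
end

section
/- For every finite abstract simplicial complex K, the number of simplices of N²(K) is at most the number of simplices of K; moreover, if K is not minimal (i.e., some vertex of K is dominated by another vertex), then the number of simplices of N²(K) is strictly smaller than the number of simplices of K. -/
/-- `K` is minimal: no vertex of `K` is dominated by another vertex. -/
def MinimalComplex {V : Type*} [DecidableEq V] (K : Set (Finset V)) : Prop :=
  ∀ v v' : V, ¬ Dominated K v v'

/-!
Every maximal simplex of `N(K)` is the star `maxStar K x` of the maximal simplices of `K`
through some vertex `x`. Hence a simplex of `N²(K)`, whose members all contain a common maximal
simplex `τ` of `K`, is the image of a nonempty set of vertices of `τ`, i.e. of a simplex of `K`;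
so `N²(K)` is the image of part of `K`. If `v` is dominated by `v'`, then
`maxStar K v ⊆ maxStar K v'`, and maximality in `N(K)` lets every label `v` be replaced by `v'`:
`N²(K)` is then the image of simplices of `K` avoiding `v`, which misses the simplex `{v}`.
-/

section

variable {V : Type*} {K : Set (Finset V)}

open Classical in
noncomputable def maxStar (K : Set (Finset V)) (hfin : K.Finite) (x : V) : Finset (Finset V) :=
  {σ ∈ hfin.toFinset | IsMaximalSimplex K σ ∧ x ∈ σ}

lemma mem_maxStar {hfin : K.Finite} {x : V} {σ : Finset V} :
    σ ∈ maxStar K hfin x ↔ IsMaximalSimplex K σ ∧ x ∈ σ := by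
  classical
  simp only [maxStar, Finset.mem_filter, Set.Finite.mem_toFinset, and_iff_right_iff_imp]
  exact fun h => h.1.1

lemma maxStar_mem_nerve {hfin : K.Finite} {x : V} (hne : (maxStar K hfin x).Nonempty) :
    maxStar K hfin x ∈ nerve K :=
  ⟨hne, fun _ hσ => (mem_maxStar.mp hσ).1, x, fun _ hσ => (mem_maxStar.mp hσ).2⟩

lemma IsMaximalSimplex.eq_maxStar_of_subset {hfin : K.Finite} {T : Finset (Finset V)} {x : V}
    (hT : IsMaximalSimplex (nerve K) T) (hsub : T ⊆ maxStar K hfin x) : T = maxStar K hfin x :=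
  hT.2 _ (maxStar_mem_nerve (hT.1.1.mono hsub)) hsub

lemma IsMaximalSimplex.exists_eq_maxStar (hfin : K.Finite) {T : Finset (Finset V)}
    (hT : IsMaximalSimplex (nerve K) T) : ∃ x, T = maxStar K hfin x := by
  obtain ⟨-, hmax, x, hx⟩ := hT.1
  exact ⟨x, hT.eq_maxStar_of_subset fun σ hσ => mem_maxStar.mpr ⟨hmax σ hσ, hx σ hσ⟩⟩

variable [DecidableEq V]

lemma nerve_nerve_subset_image (hK : IsComplex K) (hfin : K.Finite) {s : Set V}
    (hs : ∀ T, IsMaximalSimplex (nerve K) T → ∃ x ∈ s, T = maxStar K hfin x) :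
    nerve (nerve K) ⊆ (·.image (maxStar K hfin)) '' {σ ∈ K | (σ : Set V) ⊆ s} := by
  rintro 𝒮 ⟨⟨T₀, hT₀⟩, hmax, τ, hτ⟩
  have hτK : τ ∈ K := ((hmax T₀ hT₀).1.2.1 τ (hτ T₀ hT₀)).1
  have hlabels : (𝒮 : Set (Finset (Finset V))) ⊆ maxStar K hfin '' (↑τ ∩ s) := by
    intro T hT
    obtain ⟨x, hxs, rfl⟩ := hs T (hmax T hT)
    exact ⟨x, ⟨(mem_maxStar.mp (hτ _ hT)).2, hxs⟩, rfl⟩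
  obtain ⟨σ, hστ, rfl⟩ := Finset.subset_set_image_iff.mp hlabels
  have hσne : σ.Nonempty := Finset.image_nonempty.mp ⟨T₀, hT₀⟩
  exact ⟨σ, ⟨hK.2 τ hτK σ (fun x hx => (hστ hx).1) hσne, fun x hx => (hστ hx).2⟩, rfl⟩

lemma ncard_nerve_nerve_le (hK : IsComplex K) (hfin : K.Finite) {s : Set V}
    (hs : ∀ T, IsMaximalSimplex (nerve K) T → ∃ x ∈ s, T = maxStar K hfin x) :
    (nerve (nerve K)).ncard ≤ {σ ∈ K | (σ : Set V) ⊆ s}.ncard := by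
  have hfin' : {σ ∈ K | (σ : Set V) ⊆ s}.Finite := hfin.subset (Set.sep_subset _ _)
  exact (Set.ncard_le_ncard (nerve_nerve_subset_image hK hfin hs) (hfin'.image _)).trans
    (Set.ncard_image_le hfin')

variable {v v' : V}

lemma Dominated.singleton_mem (hK : IsComplex K) (h : Dominated K v v') : {v} ∈ K :=
  hK.2 _ h.2.1.2.2 {v} Finset.subset_union_right (Finset.singleton_nonempty v)

lemma Dominated.mem_of_isMaximalSimplex (hK : IsComplex K) (h : Dominated K v v')
    {σ : Finset V} (hσ : IsMaximalSimplex K σ) (hv : v ∈ σ) : v' ∈ σ := by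
  obtain ⟨-, hv'link, hcone⟩ := h
  suffices hins : insert v' σ ∈ K by
    rw [hσ.2 _ hins (Finset.subset_insert v' σ)]
    exact Finset.mem_insert_self v' σ
  by_cases hface : (σ.erase v).Nonempty
  · have hlink : σ.erase v ∈ link K v := by
      refine ⟨hK.2 σ hσ.1 _ (Finset.erase_subset v σ) hface, Finset.notMem_erase v σ, ?_⟩
      rw [Finset.union_singleton, Finset.insert_erase hv]
      exact hσ.1
    convert (hcone _ hlink).2.2 using 1
    ext x
    simp only [Finset.mem_insert, Finset.mem_union, Finset.mem_erase, Finset.mem_singleton]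
    grind
  · obtain rfl : σ = {v} := by
      rw [Finset.not_nonempty_iff_eq_empty, Finset.erase_eq_empty_iff] at hface
      exact hface.resolve_left (Finset.ne_empty_of_mem hv)
    simpa only [Finset.union_singleton, Finset.pair_comm] using hv'link.2.2

/-- Maximality in `N(K)` upgrades the star of a dominated vertex to that of its dominator. -/
lemma Dominated.exists_eq_maxStar_ne (hK : IsComplex K) (hfin : K.Finite) (h : Dominated K v v')
    {T : Finset (Finset V)} (hT : IsMaximalSimplex (nerve K) T) :
    ∃ x ∈ ({v}ᶜ : Set V), T = maxStar K hfin x := by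
  obtain ⟨x, rfl⟩ := hT.exists_eq_maxStar hfin
  by_cases hxv : x = v
  · subst hxv
    refine ⟨v', h.1, hT.eq_maxStar_of_subset fun σ hσ => ?_⟩
    obtain ⟨hσmax, hxσ⟩ := mem_maxStar.mp hσ
    exact mem_maxStar.mpr ⟨hσmax, h.mem_of_isMaximalSimplex hK hσmax hxσ⟩
  · exact ⟨x, hxv, rfl⟩

end

/-- The number of simplices of `N²(K)` is at most that of `K`, with strict
inequality whenever `K` is not minimal. -/
theorem nerve_sq_card_le {V : Type*} [DecidableEq V]
    (K : Set (Finset V)) (hK : IsComplex K) (hfin : K.Finite) :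
    (nerve (nerve K)).ncard ≤ K.ncard ∧
      (¬ MinimalComplex K → (nerve (nerve K)).ncard < K.ncard) := by
  refine ⟨?_, fun hnm => ?_⟩
  · have hle := ncard_nerve_nerve_le hK hfin (s := Set.univ) fun T hT =>
      (hT.exists_eq_maxStar hfin).imp fun x hx => ⟨Set.mem_univ x, hx⟩
    exact hle.trans (Set.ncard_le_ncard (Set.sep_subset _ _) hfin)
  · obtain ⟨v, v', hdom⟩ : ∃ v v', Dominated K v v' := by
      simpa [MinimalComplex] using hnm
    have hv_not_spanned : {v} ∉ {σ ∈ K | (σ : Set V) ⊆ {v}ᶜ} := fun h =>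
      h.2 (Finset.mem_coe.mpr (Finset.mem_singleton_self v)) rfl
    exact (ncard_nerve_nerve_le hK hfin fun T => hdom.exists_eq_maxStar_ne hK hfin).trans_lt
      (Set.ncard_lt_ncard ⟨Set.sep_subset _ _, fun h => hv_not_spanned
        (h (hdom.singleton_mem hK))⟩ hfin)
end
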